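/- Let g ∈ C^L be a window, b a divisor of L, M=L/b, and suppose K_g := min_{t=0..L-1} Σ_{k=0}^{b-1} |g[t+kM]|² > 0. Let C_N[m,m'] = σ₀² Σ_{k=0}^{L-1} conj(ĝ)[k] ĝ[k-(m'-m)b] be the noise Gabor covariance. Then for every x ∈ C^M, x* C_N x ≥ σ₀² K_g L ‖x‖² (up to normalization convention); in particular C_N, and hence any covariance of the form C_Z-part + C_N with C_Z-part positive semidefinite, is invertible. -/

import Mathlib

open MeasureTheory ProbabilityTheory Complex Finset
noncomputable section

/-- The character `e^{2πin/L}`. -/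
def fchar (L : ℕ) (n : ℤ) : ℂ := Complex.exp (2 * Real.pi * Complex.I * n / L)

/-- Unnormalized discrete Fourier transform of a signal of length `L`. -/
def dft {L : ℕ} [NeZero L] (x : ZMod L → ℂ) (k : ZMod L) : ℂ :=
  ∑ t : ZMod L, x t * fchar L (-((k.val : ℤ) * t.val))

/-- The set of positive frequencies `I_L^+ \ {0}`, i.e. `[1, L/2]` for even `L`
and `[1, (L-1)/2]` for odd `L`. -/
def posFreq (L : ℕ) [NeZero L] : Finset (ZMod L) :=
  Finset.univ.filter fun k => 1 ≤ k.val ∧ 2 * k.val ≤ L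

/-- A real random vector is (jointly) Gaussian if every linear combination of its
coordinates has a Gaussian law. -/
def IsRealGaussian {Ω : Type*} [MeasurableSpace Ω] (μ : Measure Ω) {ι : Type*} [Fintype ι]
    (X : Ω → ι → ℝ) : Prop :=
  ∀ c : ι → ℝ, ∃ m v, Measure.map (fun ω => ∑ i, c i * X ω i) μ = gaussianReal m v

/-- A complex random vector is (jointly) Gaussian if every real-linear functional of its
coordinates has a Gaussian law. -/
def IsComplexGaussian {Ω : Type*} [MeasurableSpace Ω] (μ : Measure Ω) {ι : Type*} [Fintype ι]
    (X : Ω → ι → ℂ) : Prop :=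
  ∀ c : ι → ℂ, ∃ m v, Measure.map (fun ω => (∑ i, c i * X ω i).re) μ = gaussianReal m v

/-- The discrete analytic signal of a real signal: zero the negative-frequency Fourier
coefficients and double the positive ones. -/
def analyticSignal {L : ℕ} [NeZero L] (x : ZMod L → ℝ) (t : ZMod L) : ℂ :=
  (L : ℂ)⁻¹ * ∑ k ∈ posFreq L, 2 * dft (fun s => (x s : ℂ)) k * fchar L ((k.val : ℤ) * t.val)

/-! The entry `C[m,m']` is `σ₀²/L` times the autocorrelation of `ĝ` at lag `(m'-m)b`, which by
Plancherel is `L ∑ₜ |g t|² e((m'-m)bt/L)`. Hence `x* C x = σ₀² ∑ₜ |g t|² |X t|²` for the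
trigonometric polynomial `X t = ∑ₘ xₘ e(mbt/L) = ∑ₘ xₘ e(mt/M)`, which is `M`-periodic. Writing
`t = i + jM` with `i < M`, `j < b`, the weights `∑ⱼ |g (i + jM)|²` are at least `K_g`, and Parseval
on `ZMod M` gives `∑_{i<M} |X i|² = M ‖x‖²`. A matrix with positive definite real quadratic form
(such as `C` or `A + C` with `A ⪰ 0`) has trivial kernel, hence is invertible. -/

open ZMod (stdAddChar)

section Fourier

variable {N : ℕ} [NeZero N]

lemma fchar_eq_stdAddChar (n : ℤ) : fchar N n = stdAddChar (n : ZMod N) :=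
  (ZMod.stdAddChar_coe n).symm

lemma dft_eq_sum_stdAddChar (x : ZMod N → ℂ) (k : ZMod N) :
    dft x k = ∑ t, x t * stdAddChar (-(k * t)) := by
  simp only [dft, fchar_eq_stdAddChar]
  push_cast
  simp only [ZMod.natCast_zmod_val]

lemma conj_stdAddChar (a : ZMod N) : starRingEnd ℂ (stdAddChar a) = stdAddChar (-a) := by
  rw [ZMod.stdAddChar_apply, ZMod.stdAddChar_apply, ← Circle.coe_inv_eq_conj,
    AddChar.map_neg_eq_inv]

lemma sum_stdAddChar_mul (a : ZMod N) :
    ∑ u, stdAddChar (a * u) = if a = 0 then (N : ℂ) else 0 := by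
  simp_rw [mul_comm a]
  rw [AddChar.sum_mulShift a (ZMod.isPrimitive_stdAddChar N), ZMod.card, Nat.cast_ite,
    Nat.cast_zero]

def dftAutocorr (f : ZMod N → ℂ) (a : ZMod N) : ℂ :=
  ∑ k, starRingEnd ℂ (dft f k) * dft f (k - a)

lemma dftAutocorr_eq (f : ZMod N → ℂ) (a : ZMod N) :
    dftAutocorr f a = N * ∑ t, ‖f t‖ ^ 2 * stdAddChar (a * t) := by
  calc dftAutocorr f a
      = ∑ t, ∑ s, starRingEnd ℂ (f t) * f s * stdAddChar (a * s) *
          ∑ k, stdAddChar ((t - s) * k) := by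
        simp_rw [dftAutocorr, dft_eq_sum_stdAddChar, map_sum, map_mul, conj_stdAddChar,
          Finset.sum_mul_sum, Finset.mul_sum]
        rw [Finset.sum_comm]
        refine Finset.sum_congr rfl fun t _ => ?_
        rw [Finset.sum_comm]
        refine Finset.sum_congr rfl fun s _ => Finset.sum_congr rfl fun k _ => ?_
        rw [mul_mul_mul_comm, mul_assoc, ← AddChar.map_add_eq_mul, mul_assoc _ (stdAddChar _),
          ← AddChar.map_add_eq_mul, ← mul_assoc]
        congr 2
        ring
    _ = N * ∑ t, ‖f t‖ ^ 2 * stdAddChar (a * t) := by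
        simp only [sum_stdAddChar_mul, sub_eq_zero, mul_ite, mul_zero, Finset.sum_ite_eq,
          Finset.mem_univ, if_true, Complex.conj_mul', Finset.mul_sum]
        refine Finset.sum_congr rfl fun t _ => ?_
        ring

variable {ι : Type*} [Fintype ι]

lemma norm_sum_mul_stdAddChar_sq (x : ι → ℂ) (ν : ι → ZMod N) (u : ZMod N) :
    (‖∑ m, x m * stdAddChar (ν m * u)‖ ^ 2 : ℂ) =
      ∑ m, ∑ m', starRingEnd ℂ (x m) * x m' * stdAddChar ((ν m' - ν m) * u) := by
  rw [← Complex.conj_mul', map_sum, Finset.sum_mul_sum]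
  refine Finset.sum_congr rfl fun m _ => Finset.sum_congr rfl fun m' _ => ?_
  rw [map_mul, conj_stdAddChar, sub_mul, sub_eq_add_neg, AddChar.map_add_eq_mul, ← neg_mul]
  ring

lemma sum_norm_sum_mul_stdAddChar_sq {x : ι → ℂ} {ν : ι → ZMod N}
    (hν : Function.Injective ν) :
    ∑ u, ‖∑ m, x m * stdAddChar (ν m * u)‖ ^ 2 = N * ∑ m, ‖x m‖ ^ 2 := by
  classical
  suffices h : (∑ u, ‖∑ m, x m * stdAddChar (ν m * u)‖ ^ 2 : ℂ) = N * ∑ m, (‖x m‖ ^ 2 : ℂ) by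
    exact_mod_cast h
  simp_rw [norm_sum_mul_stdAddChar_sq]
  rw [Finset.sum_comm]
  simp_rw [Finset.sum_comm (s := Finset.univ (α := ZMod N)), ← Finset.mul_sum,
    sum_stdAddChar_mul, sub_eq_zero, hν.eq_iff]
  simp only [mul_ite, mul_zero, Finset.sum_ite_eq', Finset.mem_univ, if_true, Finset.mul_sum]
  refine Finset.sum_congr rfl fun m _ => ?_
  rw [Complex.conj_mul', mul_comm]

lemma sum_conj_mul_dftAutocorr (f : ZMod N → ℂ) (x : ι → ℂ) (ν : ι → ZMod N) :
    ∑ m, ∑ m', starRingEnd ℂ (x m) * x m' * dftAutocorr f (ν m' - ν m) =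
      ((N * ∑ t, ‖f t‖ ^ 2 * ‖∑ m, x m * stdAddChar (ν m * t)‖ ^ 2 : ℝ) : ℂ) := by
  push_cast
  simp_rw [norm_sum_mul_stdAddChar_sq, dftAutocorr_eq, Finset.mul_sum]
  conv_rhs => rw [Finset.sum_comm]
  refine Finset.sum_congr rfl fun m _ => ?_
  rw [Finset.sum_comm]
  refine Finset.sum_congr rfl fun m' _ => Finset.sum_congr rfl fun t _ => ?_
  ring

end Fourier

lemma sum_zmod_eq_sum_range {N : ℕ} [NeZero N] {β : Type*} [AddCommMonoid β] (f : ZMod N → β) :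
    ∑ t, f t = ∑ n ∈ Finset.range N, f n := by
  refine Finset.sum_nbij' ZMod.val (↑) (fun t _ => Finset.mem_range.mpr t.val_lt)
    (fun _ _ => Finset.mem_univ _) (fun t _ => ZMod.natCast_zmod_val t)
    (fun n hn => ZMod.val_natCast_of_lt (Finset.mem_range.mp hn)) (fun t _ => ?_)
  rw [ZMod.natCast_zmod_val]

lemma sum_range_mul_eq_sum_sum {β : Type*} [AddCommMonoid β] (f : ℕ → β) (M b : ℕ) :
    ∑ n ∈ Finset.range (M * b), f n =
      ∑ i ∈ Finset.range M, ∑ j ∈ Finset.range b, f (i + j * M) := by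
  induction b with
  | zero => simp
  | succ b ih =>
    rw [Nat.mul_succ, Finset.sum_range_add, ih, ← Finset.sum_add_distrib]
    refine Finset.sum_congr rfl fun i _ => ?_
    rw [Finset.sum_range_succ, Nat.mul_comm M b, Nat.add_comm (b * M) i]

section Subsampling

variable {L M b : ℕ} [NeZero L] [NeZero M]

lemma stdAddChar_intCast_mul_mul_eq (hL : L = M * b) (n : ℤ) (t : ZMod L) :
    stdAddChar (((n * b : ℤ) : ZMod L) * t) = stdAddChar ((n : ZMod M) * ZMod.cast t) := by
  obtain ⟨s, rfl⟩ := ZMod.intCast_surjective t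
  have hb : (b : ℂ) ≠ 0 := fun h => NeZero.ne L (by rw [hL, Nat.cast_eq_zero.mp h, mul_zero])
  rw [ZMod.cast_intCast (Dvd.intro b hL.symm), ← Int.cast_mul, ← Int.cast_mul,
    ZMod.stdAddChar_coe, ZMod.stdAddChar_coe, hL]
  congr 1
  push_cast
  field_simp

lemma le_sum_mul_comp_cast (hL : L = M * b) {w : ZMod L → ℝ} {F : ZMod M → ℝ}
    (hF : ∀ u, 0 ≤ F u) {K : ℝ}
    (hK : ∀ t, K ≤ ∑ j ∈ Finset.range b, w (t + ((j * M : ℕ) : ZMod L))) :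
    K * ∑ u, F u ≤ ∑ t, w t * F (ZMod.cast t) := by
  have hdvd : M ∣ L := Dvd.intro b hL.symm
  calc K * ∑ u, F u = ∑ i ∈ Finset.range M, K * F i := by
        rw [sum_zmod_eq_sum_range, Finset.mul_sum]
    _ ≤ ∑ i ∈ Finset.range M, (∑ j ∈ Finset.range b, w ((i + j * M : ℕ) : ZMod L)) * F i := by
        refine Finset.sum_le_sum fun i _ => mul_le_mul_of_nonneg_right ?_ (hF _)
        simpa only [Nat.cast_add] using hK i
    _ = ∑ t, w t * F (ZMod.cast t) := by
        rw [sum_zmod_eq_sum_range, show Finset.range L = Finset.range (M * b) by rw [hL],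
          sum_range_mul_eq_sum_sum]
        refine Finset.sum_congr rfl fun i _ => ?_
        rw [Finset.sum_mul]
        refine Finset.sum_congr rfl fun j _ => ?_
        rw [ZMod.cast_natCast hdvd]
        push_cast
        simp only [CharP.cast_eq_zero, mul_zero, add_zero]

end Subsampling

lemma natCast_zmod_injective_fin (M : ℕ) :
    Function.Injective fun m : Fin M => ((m : ℕ) : ZMod M) :=
  fun m m' h => Fin.ext <| by
    simpa only [ZMod.val_natCast_of_lt m.isLt, ZMod.val_natCast_of_lt m'.isLt]
      using congrArg ZMod.val h

section Gabor

variable {L : ℕ} [NeZero L]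

def noiseGaborCov (g : ZMod L → ℂ) (b M : ℕ) (σ₀ : ℝ) : Matrix (Fin M) (Fin M) ℂ :=
  Matrix.of fun m m' =>
    (σ₀ ^ 2 / L : ℂ) * dftAutocorr g ((((m' : ℤ) - (m : ℤ)) * b : ℤ) : ZMod L)

lemma star_dotProduct_noiseGaborCov_mulVec (g : ZMod L → ℂ) (b : ℕ) {M : ℕ} (σ₀ : ℝ)
    (x : Fin M → ℂ) :
    star x ⬝ᵥ (noiseGaborCov g b M σ₀).mulVec x = ((σ₀ ^ 2 * ∑ t, ‖g t‖ ^ 2 *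
      ‖∑ m, x m * stdAddChar ((((m : ℤ) * b : ℤ) : ZMod L) * t)‖ ^ 2 : ℝ) : ℂ) := by
  have hν : ∀ m m' : Fin M, ((((m' : ℤ) - (m : ℤ)) * b : ℤ) : ZMod L) =
      (((m' : ℤ) * b : ℤ) : ZMod L) - (((m : ℤ) * b : ℤ) : ZMod L) := fun m m' => by
    push_cast; ring
  have hL : (L : ℂ) ≠ 0 := Nat.cast_ne_zero.mpr (NeZero.ne L)
  calc star x ⬝ᵥ (noiseGaborCov g b M σ₀).mulVec x
      = (σ₀ ^ 2 / L : ℂ) * ∑ m, ∑ m', starRingEnd ℂ (x m) * x m' *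
          dftAutocorr g ((((m' : ℤ) * b : ℤ) : ZMod L) - (((m : ℤ) * b : ℤ) : ZMod L)) := by
        simp only [dotProduct, Matrix.mulVec, noiseGaborCov, Matrix.of_apply, Finset.mul_sum, hν]
        refine Finset.sum_congr rfl fun m _ => Finset.sum_congr rfl fun m' _ => ?_
        simp only [Pi.star_apply, RCLike.star_def]
        ring
    _ = _ := by
        rw [sum_conj_mul_dftAutocorr]
        push_cast
        field_simp

lemma le_re_star_dotProduct_noiseGaborCov_mulVec (g : ZMod L → ℂ) {b M : ℕ} (hL : L = M * b)
    (σ₀ : ℝ) {K : ℝ}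
    (hK : ∀ t : ZMod L, K ≤ ∑ k ∈ Finset.range b, ‖g (t + ((k * M : ℕ) : ZMod L))‖ ^ 2)
    (x : Fin M → ℂ) :
    σ₀ ^ 2 * K * M * ∑ m, ‖x m‖ ^ 2 ≤ (star x ⬝ᵥ (noiseGaborCov g b M σ₀).mulVec x).re := by
  have : NeZero M := ⟨fun h => NeZero.ne L (by rw [hL, h, zero_mul])⟩
  rw [star_dotProduct_noiseGaborCov_mulVec, Complex.ofReal_re, mul_assoc, mul_assoc]
  gcongr
  simp_rw [stdAddChar_intCast_mul_mul_eq hL, Int.cast_natCast]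
  calc K * (M * ∑ m, ‖x m‖ ^ 2)
      = K * ∑ u, ‖∑ m, x m * stdAddChar (((m : ℕ) : ZMod M) * u)‖ ^ 2 := by
        rw [sum_norm_sum_mul_stdAddChar_sq (natCast_zmod_injective_fin M)]
    _ ≤ _ := le_sum_mul_comp_cast hL (fun _ => by positivity) hK

end Gabor

lemma isUnit_of_re_star_dotProduct_mulVec_pos {n : Type*} [Fintype n] [DecidableEq n]
    {A : Matrix n n ℂ} (hA : ∀ x ≠ 0, 0 < (star x ⬝ᵥ A.mulVec x).re) : IsUnit A := by
  refine Matrix.mulVec_injective_iff_isUnit.mp fun u v huv => ?_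
  by_contra hne
  have h := hA (u - v) (sub_ne_zero.mpr hne)
  rw [Matrix.mulVec_sub, huv, sub_self, dotProduct_zero, Complex.zero_re] at h
  exact h.false

open Matrix
open scoped ComplexOrder in
theorem noise_gabor_covariance_invertible_general
    {L : ℕ} [NeZero L] (g : ZMod L → ℂ) (b : ℕ) (hb : b ∣ L) (M : ℕ) (hM : M = L / b)
    (σ₀ Kg : ℝ) (hσ : σ₀ ≠ 0) (hKpos : 0 < Kg)
    (hK : ∀ t : ZMod L, Kg ≤ ∑ k ∈ Finset.range b, ‖g (t + ((k * M : ℕ) : ZMod L))‖ ^ 2)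
    (C : Matrix (Fin M) (Fin M) ℂ)
    (hC : ∀ m m' : Fin M, C m m' = (σ₀ ^ 2 / L : ℂ) * ∑ k : ZMod L,
      (starRingEnd ℂ) (dft g k) * dft g (k - ((((m' : ℤ) - (m : ℤ)) * b : ℤ) : ZMod L))) :
    (∀ x : Fin M → ℂ, σ₀ ^ 2 * Kg * M * (∑ m, ‖x m‖ ^ 2) ≤ Complex.re (star x ⬝ᵥ C.mulVec x)) ∧
    IsUnit C ∧
    ∀ A : Matrix (Fin M) (Fin M) ℂ, A.PosSemidef → IsUnit (A + C) := by
  obtain rfl : C = noiseGaborCov g b M σ₀ := Matrix.ext hC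
  have hL : L = M * b := by rw [hM, Nat.div_mul_cancel hb]
  have bound := le_re_star_dotProduct_noiseGaborCov_mulVec g hL σ₀ hK
  have pos : ∀ x ≠ 0, 0 < (star x ⬝ᵥ (noiseGaborCov g b M σ₀).mulVec x).re := fun x hx => by
    obtain ⟨m, hm⟩ := Function.ne_iff.mp hx
    have : 0 < ∑ m, ‖x m‖ ^ 2 :=
      Finset.sum_pos' (fun _ _ => by positivity) ⟨m, Finset.mem_univ m, by positivity⟩
    have : (0 : ℝ) < M := by exact_mod_cast m.pos
    exact (bound x).trans_lt' (by positivity)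
  refine ⟨bound, isUnit_of_re_star_dotProduct_mulVec_pos pos, fun A hA => ?_⟩
  refine isUnit_of_re_star_dotProduct_mulVec_pos fun x hx => ?_
  rw [Matrix.add_mulVec, dotProduct_add, Complex.add_re]
  exact add_pos_of_nonneg_of_pos
    (Complex.nonneg_iff.mp (hA.dotProduct_mulVec_nonneg x)).1 (pos x hx)

open scoped ComplexOrder in
/-- if `K_g := min_t ∑_{k<b} |g[t+kM]|² > 0`, then the noise Gabor covariance
`C_N[m,m'] = (σ₀²/L) ∑_k conj(ĝ)[k] ĝ[k-(m'-m)b]` satisfies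
`x* C_N x ≥ σ₀² K_g M ‖x‖²` (normalization matching the unnormalized DFT); in particular
`C_N`, and any matrix of the form `A + C_N` with `A` positive semidefinite, is invertible. -/
theorem noise_gabor_covariance_invertible
    {L : ℕ} [NeZero L] (g : ZMod L → ℂ) (b : ℕ) (hb : b ∣ L) (M : ℕ) (hM : M = L / b)
    (σ₀ Kg : ℝ) (hσ : σ₀ ≠ 0) (hKpos : 0 < Kg)
    (hK : ∀ t : ZMod L, Kg ≤ ∑ k ∈ Finset.range b, ‖g (t + ((k * M : ℕ) : ZMod L))‖ ^ 2)
    (hKmin : ∃ t : ZMod L, Kg = ∑ k ∈ Finset.range b, ‖g (t + ((k * M : ℕ) : ZMod L))‖ ^ 2)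
    (C : Matrix (Fin M) (Fin M) ℂ)
    (hC : ∀ m m' : Fin M, C m m' = (σ₀ ^ 2 / L : ℂ) * ∑ k : ZMod L,
      (starRingEnd ℂ) (dft g k) * dft g (k - ((((m' : ℤ) - (m : ℤ)) * b : ℤ) : ZMod L))) :
    (∀ x : Fin M → ℂ, σ₀ ^ 2 * Kg * M * (∑ m, ‖x m‖ ^ 2) ≤ Complex.re (star x ⬝ᵥ C.mulVec x)) ∧
    IsUnit C ∧
    ∀ A : Matrix (Fin M) (Fin M) ℂ, A.PosSemidef → IsUnit (A + C) :=
  noise_gabor_covariance_invertible_general g b hb M hM σ₀ Kg hσ hKpos hK C hC
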